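/- Let p ≥ 5 be a prime. Then for every k ≥ 1 the group C_{p^k} × C_{p^k} is a Beauville group; in particular there exist infinitely many pairwise non-isomorphic abelian Beauville p-groups. -/

import Mathlib

open Subgroup

/-- Σ(g,h): the union of all conjugates of all (nontrivial-index) powers of g, h and gh. -/
def SigmaSet {G : Type*} [Group G] (g h : G) : Set G :=
  { z | ∃ i : ℕ, 1 ≤ i ∧ i ≤ Nat.card G ∧ ∃ k : G,
      z = k⁻¹ * g ^ i * k ∨ z = k⁻¹ * h ^ i * k ∨ z = k⁻¹ * (g * h) ^ i * k }

/-- A Beauville group. -/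
def IsBeauville (G : Type*) [Group G] : Prop :=
  ∃ x₁ y₁ x₂ y₂ : G, closure {x₁, y₁} = ⊤ ∧ closure {x₂, y₂} = ⊤ ∧
    SigmaSet x₁ y₁ ∩ SigmaSet x₂ y₂ = {1}

/-- A strongly real Beauville group. -/
def IsStronglyRealBeauville (G : Type*) [Group G] : Prop :=
  ∃ x₁ y₁ x₂ y₂ : G, closure {x₁, y₁} = ⊤ ∧ closure {x₂, y₂} = ⊤ ∧
    SigmaSet x₁ y₁ ∩ SigmaSet x₂ y₂ = {1} ∧
    ∃ (φ : MulAut G) (g₁ g₂ : G),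
      g₁ * φ x₁ * g₁⁻¹ = x₁⁻¹ ∧ g₁ * φ y₁ * g₁⁻¹ = y₁⁻¹ ∧
      g₂ * φ x₂ * g₂⁻¹ = x₂⁻¹ ∧ g₂ * φ y₂ * g₂⁻¹ = y₂⁻¹

/-- The shift automorphism of the base group of the wreath product. -/
def shiftAut (q r : ℕ) (c : ZMod r) :
    (ZMod r → Multiplicative (ZMod q)) ≃* (ZMod r → Multiplicative (ZMod q)) where
  toFun f j := f (j - c)
  invFun f j := f (j + c)
  left_inv f := by funext j; simp
  right_inv f := by funext j; simp
  map_mul' f g := rfl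

/-- The action of the top group C_r on the base group (C_q)^r by cyclic shift. -/
def wrAct (q r : ℕ) :
    Multiplicative (ZMod r) →* MulAut (ZMod r → Multiplicative (ZMod q)) where
  toFun c := shiftAut q r c.toAdd
  map_one' := by ext f j; simp [shiftAut]
  map_mul' a b := by ext f j; simp [shiftAut, sub_sub]

/-- The wreath product C_q ≀ C_r = (C_q)^r ⋊ C_r. -/
abbrev Wr (q r : ℕ) : Type :=
  (ZMod r → Multiplicative (ZMod q)) ⋊[wrAct q r] Multiplicative (ZMod r)

/-- The standard base generator x of C_q ≀ C_r (generating one base coordinate). -/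
def wx (q r : ℕ) : Wr q r :=
  SemidirectProduct.inl (Pi.mulSingle 0 (Multiplicative.ofAdd (1 : ZMod q)))

/-- The standard top generator y of C_q ≀ C_r (cyclically permuting the coordinates). -/
def wy (q r : ℕ) : Wr q r := SemidirectProduct.inr (Multiplicative.ofAdd (1 : ZMod r))

/-!
In an abelian group conjugation is trivial, so `Σ(x, y)` is the union of the cyclic subgroups
generated by `x`, `y` and `xy`. In `C_n × C_n = (ℤ/n)²` two cyclic subgroups `⟨g⟩`, `⟨h⟩` meet
trivially, and `g, h` generate, as soon as `det (g, h)` is a unit. For the generating pairs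
`(1,0), (0,1)` and `(1,2), (1,-1)` (with products `(1,1)` and `(2,1)`) the nine cross determinants
are `±1, ±2`, and the second pair has determinant `-3`; all are units when `p ≥ 5`.
The groups are pairwise non-isomorphic because `C_{p^k} × C_{p^k}` has order `p^{2k}`.
-/

open Multiplicative

section SigmaSet

variable {G : Type*}

theorem one_mem_sigmaSet [Group G] [Finite G] (g h : G) : (1 : G) ∈ SigmaSet g h :=
  ⟨Nat.card G, Nat.card_pos, le_rfl, 1, Or.inl (by simp [pow_card_eq_one'])⟩

theorem exists_mem_zpowers_of_mem_sigmaSet [CommGroup G] {g h z : G} (hz : z ∈ SigmaSet g h) :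
    ∃ u ∈ ({g, h, g * h} : Set G), z ∈ zpowers u := by
  obtain ⟨i, -, -, k, hk | hk | hk⟩ := hz <;>
    simp only [mul_right_comm _ _ k, inv_mul_cancel, one_mul] at hk <;> subst hk
  · exact ⟨g, by simp, pow_mem (mem_zpowers g) i⟩
  · exact ⟨h, by simp, pow_mem (mem_zpowers h) i⟩
  · exact ⟨g * h, by simp, pow_mem (mem_zpowers _) i⟩

theorem isBeauville_of_disjoint_zpowers [CommGroup G] [Finite G] {x₁ y₁ x₂ y₂ : G}
    (h₁ : Subgroup.closure {x₁, y₁} = ⊤) (h₂ : Subgroup.closure {x₂, y₂} = ⊤)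
    (hdisj : ∀ u ∈ ({x₁, y₁, x₁ * y₁} : Set G), ∀ v ∈ ({x₂, y₂, x₂ * y₂} : Set G),
      Disjoint (zpowers u) (zpowers v)) :
    IsBeauville G := by
  refine ⟨x₁, y₁, x₂, y₂, h₁, h₂, Set.eq_singleton_iff_unique_mem.2 ⟨?_, ?_⟩⟩
  · exact ⟨one_mem_sigmaSet _ _, one_mem_sigmaSet _ _⟩
  · rintro z ⟨hz₁, hz₂⟩
    obtain ⟨u, hu, hzu⟩ := exists_mem_zpowers_of_mem_sigmaSet hz₁
    obtain ⟨v, hv, hzv⟩ := exists_mem_zpowers_of_mem_sigmaSet hz₂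
    exact disjoint_def.1 (hdisj u hu v hv) hzu hzv

end SigmaSet

abbrev CyclicSq (n : ℕ) : Type := Multiplicative (ZMod n) × Multiplicative (ZMod n)

namespace CyclicSq

variable {n : ℕ}

def mk (a b : ZMod n) : CyclicSq n := (ofAdd a, ofAdd b)

def det (g h : CyclicSq n) : ZMod n :=
  g.1.toAdd * h.2.toAdd - g.2.toAdd * h.1.toAdd

@[simp]
theorem mk_mul_mk (a b c d : ZMod n) : mk a b * mk c d = mk (a + c) (b + d) := rfl

@[simp]
theorem det_mk (a b c d : ZMod n) : det (mk a b) (mk c d) = a * d - b * c := rfl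

theorem ext_toAdd {g h : CyclicSq n} (h₁ : g.1.toAdd = h.1.toAdd)
    (h₂ : g.2.toAdd = h.2.toAdd) : g = h :=
  Prod.ext (toAdd.injective h₁) (toAdd.injective h₂)

theorem toAdd_fst_zpow (g : CyclicSq n) (i : ℤ) : (g ^ i).1.toAdd = i * g.1.toAdd := by
  rw [Prod.pow_fst, toAdd_zpow, zsmul_eq_mul]

theorem toAdd_snd_zpow (g : CyclicSq n) (i : ℤ) : (g ^ i).2.toAdd = i * g.2.toAdd := by
  rw [Prod.pow_snd, toAdd_zpow, zsmul_eq_mul]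

theorem disjoint_zpowers_of_isUnit_det {g h : CyclicSq n} (hdet : IsUnit (det g h)) :
    Disjoint (zpowers g) (zpowers h) := by
  refine disjoint_def.2 ?_
  rintro _ ⟨i, rfl⟩ ⟨j, hj⟩
  have e₁ := congrArg (fun z : CyclicSq n => z.1.toAdd) hj
  have e₂ := congrArg (fun z : CyclicSq n => z.2.toAdd) hj
  simp only [toAdd_fst_zpow, toAdd_snd_zpow] at e₁ e₂
  have hi : (i : ZMod n) = 0 := by
    refine hdet.mul_left_eq_zero.1 ?_
    unfold det
    linear_combination h.1.toAdd * e₂ - h.2.toAdd * e₁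
  exact ext_toAdd (by simp [hi]) (by simp [hi])

theorem closure_eq_top_of_isUnit_det {g h : CyclicSq n} (hdet : IsUnit (det g h)) :
    Subgroup.closure {g, h} = ⊤ := by
  refine (eq_top_iff' _).2 fun z => ?_
  have hinv := ZMod.mul_inv_of_unit _ hdet
  -- Cramer's rule for the coordinates of `z` in the basis `g, h`
  obtain ⟨i, hi⟩ := ZMod.intCast_surjective
    ((z.1.toAdd * h.2.toAdd - z.2.toAdd * h.1.toAdd) * (det g h)⁻¹)
  obtain ⟨j, hj⟩ := ZMod.intCast_surjective
    ((g.1.toAdd * z.2.toAdd - g.2.toAdd * z.1.toAdd) * (det g h)⁻¹)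
  have hz : z = g ^ i * h ^ j := by
    refine ext_toAdd ?_ ?_ <;>
      simp only [Prod.fst_mul, Prod.snd_mul, toAdd_mul, toAdd_fst_zpow, toAdd_snd_zpow, hi, hj] <;>
      unfold det at hinv ⊢
    · linear_combination -z.1.toAdd * hinv
    · linear_combination -z.2.toAdd * hinv
  rw [hz]
  exact mul_mem (zpow_mem (subset_closure (by simp)) i) (zpow_mem (subset_closure (by simp)) j)

theorem isBeauville (n : ℕ) [NeZero n] (hn : Nat.Coprime 6 n) : IsBeauville (CyclicSq n) := by
  have h2 : IsUnit (2 : ZMod n) := by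
    exact_mod_cast (ZMod.isUnit_iff_coprime 2 n).2 (Nat.Coprime.coprime_dvd_left (by norm_num) hn)
  have h3 : IsUnit (3 : ZMod n) := by
    exact_mod_cast (ZMod.isUnit_iff_coprime 3 n).2 (Nat.Coprime.coprime_dvd_left (by norm_num) hn)
  refine isBeauville_of_disjoint_zpowers (x₁ := mk 1 0) (y₁ := mk 0 1) (x₂ := mk 1 2)
    (y₂ := mk 1 (-1)) (closure_eq_top_of_isUnit_det ?_) (closure_eq_top_of_isUnit_det ?_) ?_
  · simp
  · norm_num [h3]
  · simp only [Set.mem_insert_iff, Set.mem_singleton_iff, mk_mul_mk]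
    rintro u (rfl | rfl | rfl) v (rfl | rfl | rfl) <;> apply disjoint_zpowers_of_isUnit_det <;>
      norm_num [h2]

theorem card_eq_sq (n : ℕ) [NeZero n] : Nat.card (CyclicSq n) = n ^ 2 := by
  rw [Nat.card_prod, Nat.card_congr Multiplicative.toAdd, Nat.card_zmod, sq]

end CyclicSq

/-- for every prime p ≥ 5 and every k ≥ 1 the group C_{p^k} × C_{p^k} is a
Beauville group, and these groups are pairwise non-isomorphic, so there are infinitely
many pairwise non-isomorphic abelian Beauville p-groups. -/
theorem stmt4 (p : ℕ) (hp : p.Prime) (hp5 : 5 ≤ p) :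
    (∀ k : ℕ, 1 ≤ k →
      IsBeauville (Multiplicative (ZMod (p ^ k)) × Multiplicative (ZMod (p ^ k)))) ∧
    ∀ k l : ℕ, k ≠ l →
      IsEmpty ((Multiplicative (ZMod (p ^ k)) × Multiplicative (ZMod (p ^ k))) ≃*
        (Multiplicative (ZMod (p ^ l)) × Multiplicative (ZMod (p ^ l)))) := by
  have hp6 : Nat.Coprime 6 p := Nat.Coprime.mul_left
    ((Nat.coprime_primes Nat.prime_two hp).2 (by omega))
    ((Nat.coprime_primes Nat.prime_three hp).2 (by omega))
  have (k : ℕ) : NeZero (p ^ k) := ⟨pow_ne_zero k hp.ne_zero⟩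
  refine ⟨fun k _ => CyclicSq.isBeauville (p ^ k) (hp6.pow_right k),
    fun k l hkl => ⟨fun e => hkl ?_⟩⟩
  have hcard := Nat.card_congr e.toEquiv
  rw [CyclicSq.card_eq_sq, CyclicSq.card_eq_sq, ← pow_mul, ← pow_mul] at hcard
  have := Nat.pow_right_injective hp.two_le hcard
  omega
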